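/- arXiv:2508.17314 — 7 statements merged into one kernel-verified Lean document; each statement's English description precedes it below -/
import Mathlib

section
/- For α ≠ -1 and s with (α+1)s > 0, the function ρ(s) = (sinh((α+1)s))^{-1/(α+1)} satisfies the differential equation ρ·ρ'' - (α+2)·(ρ')² + (1+α)·ρ² = 0. -/
/-!
Writing `ρ = u ^ p` with `u s = sinh ((α + 1) s)` and `p = -1 / (α + 1)`, the power substitution
turns the nonlinear equation into `p ρ ρ'' - (p - 1) ρ'² = p² ρ² u'' / u`; since `u'' = (α + 1)² u`
and `p (α + 1) = -1`, the right-hand side is `ρ²`, which is the claimed equation after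
multiplying by `-(α + 1)`.
-/

open Real Filter Topology

section PowerSubstitution

variable {u u' : ℝ → ℝ} {u'' p s : ℝ}

theorem deriv_rpow_eventuallyEq (hu : ∀ᶠ x in 𝓝 s, HasDerivAt u (u' x) x) (hs : u s ≠ 0) :
    deriv (fun x => u x ^ p) =ᶠ[𝓝 s] fun x => u' x * p * u x ^ (p - 1) := by
  filter_upwards [hu, hu.self_of_nhds.continuousAt.eventually_ne hs] with x hux hx
  exact (hux.rpow_const (Or.inl hx)).deriv

theorem rpow_comp_deriv_deriv_eq (hu : ∀ᶠ x in 𝓝 s, HasDerivAt u (u' x) x) (hs : u s ≠ 0)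
    (hu' : HasDerivAt u' u'' s) :
    p * (u s ^ p * deriv (deriv fun x => u x ^ p) s) - (p - 1) * deriv (fun x => u x ^ p) s ^ 2
      = p ^ 2 * (u s ^ p) ^ 2 * u'' / u s := by
  have hρ' := deriv_rpow_eventuallyEq (p := p) hu hs
  have hρ'' : HasDerivAt (fun x => u' x * p * u x ^ (p - 1))
      (u'' * p * u s ^ (p - 1) + u' s * p * (u' s * (p - 1) * u s ^ (p - 1 - 1))) s :=
    (hu'.mul_const p).mul (hu.self_of_nhds.rpow_const (Or.inl hs))
  rw [hρ'.deriv_eq, hρ''.deriv, hρ'.self_of_nhds]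
  simp only [rpow_sub_one hs]
  field_simp
  ring

end PowerSubstitution

theorem stmt_7_general (α : ℝ) (ρ : ℝ → ℝ)
    (hρ : ∀ s : ℝ, ρ s = (Real.sinh ((α + 1) * s)) ^ (-(1 / (α + 1)))) :
    ∀ s : ℝ, (α + 1) * s > 0 →
      ρ s * deriv (deriv ρ) s - (α + 2) * (deriv ρ s) ^ 2 + (1 + α) * (ρ s) ^ 2 = 0 := by
  intro s hs
  obtain ⟨a, rfl⟩ : ∃ a, α = a - 1 := ⟨α + 1, by ring⟩
  simp only [sub_add_cancel] at hρ hs ⊢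
  have hsinh (x : ℝ) : HasDerivAt (fun x => sinh (a * x)) (a * cosh (a * x)) x :=
    (((hasDerivAt_id' x).const_mul a).sinh).congr_deriv (by ring)
  have hcosh : HasDerivAt (fun x => a * cosh (a * x)) (a ^ 2 * sinh (a * s)) s :=
    ((((hasDerivAt_id' s).const_mul a).cosh).const_mul a).congr_deriv (by ring)
  have hu : sinh (a * s) ≠ 0 := (sinh_pos_iff.2 hs).ne'
  have key := rpow_comp_deriv_deriv_eq (p := -(1 / a)) (Eventually.of_forall hsinh) hu hcosh
  have ha : a ≠ 0 := by rintro rfl; simp at hs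
  rw [show ρ = fun x => sinh (a * x) ^ (-(1 / a)) from funext hρ]
  field_simp at key
  linear_combination -key

/-- For α ≠ -1 and (α+1)s > 0, ρ(s) = sinh((α+1)s)^{-1/(α+1)} satisfies
ρρ'' - (α+2)ρ'² + (1+α)ρ² = 0. -/
theorem stmt_7 (α : ℝ) (hα : α ≠ -1) (ρ : ℝ → ℝ)
    (hρ : ∀ s : ℝ, ρ s = (Real.sinh ((α + 1) * s)) ^ (-(1 / (α + 1)))) :
    ∀ s : ℝ, (α + 1) * s > 0 →
      ρ s * deriv (deriv ρ) s - (α + 2) * (deriv ρ s) ^ 2 + (1 + α) * (ρ s) ^ 2 = 0 :=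
  stmt_7_general α ρ hρ
end

section
/- Let ρ : I → (0,∞) be smooth and satisfy ρ·ρ'' + (α-2)·(ρ')² + (1-α)·ρ² = 0 on I, and let σ = 1/ρ. Then σ satisfies σ·σ'' + ((2-α)-2)·(σ')² + (1-(2-α))·σ² = 0, i.e., the same ODE with α replaced by 2-α. -/
/-- If ρ > 0 is smooth and satisfies ρρ'' + (α-2)ρ'² + (1-α)ρ² = 0 on an open set I,
then σ = 1/ρ satisfies the same ODE with α replaced by 2-α. -/
theorem stmt_8 (α : ℝ) (I : Set ℝ) (hI : IsOpen I) (ρ : ℝ → ℝ)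
    (hsm : ContDiff ℝ (⊤ : ℕ∞) ρ) (hpos : ∀ s ∈ I, 0 < ρ s)
    (hode : ∀ s ∈ I, ρ s * deriv (deriv ρ) s + (α - 2) * (deriv ρ s) ^ 2 + (1 - α) * (ρ s) ^ 2 = 0)
    (σ : ℝ → ℝ) (hσ : ∀ s : ℝ, σ s = (ρ s)⁻¹) :
    ∀ s ∈ I, σ s * deriv (deriv σ) s + ((2 - α) - 2) * (deriv σ s) ^ 2 + (1 - (2 - α)) * (σ s) ^ 2 = 0 := by
  have hσf : σ = fun x => (ρ x)⁻¹ := funext hσ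
  have hρd : Differentiable ℝ ρ := hsm.differentiable (by simp)
  have hsm2 : ContDiff ℝ (↑(⊤ : ℕ∞)) ρ := hsm.of_le (by simp)
  have hρ'd : Differentiable ℝ (deriv ρ) :=
    ((hsm2.iterate_deriv 1)).differentiable (by simp)
  intro s hs
  have hρs : ρ s ≠ 0 := (hpos s hs).ne'
  have hU : IsOpen {x | ρ x ≠ 0} := isOpen_compl_singleton.preimage hsm.continuous
  have hder : ∀ x ∈ {x | ρ x ≠ 0}, HasDerivAt σ (-(deriv ρ x) / (ρ x) ^ 2) x := by
    intro x hx
    rw [hσf]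
    exact (hρd x).hasDerivAt.inv hx
  have hσ'eq : deriv σ s = -(deriv ρ s) / (ρ s) ^ 2 := (hder s hρs).deriv
  have hev : deriv σ =ᶠ[nhds s] fun x => -(deriv ρ x) / (ρ x) ^ 2 :=
    Filter.eventuallyEq_of_mem (hU.mem_nhds hρs) (fun x hx => (hder x hx).deriv)
  have h1 : HasDerivAt (deriv ρ) (deriv (deriv ρ) s) s := (hρ'd s).hasDerivAt
  have h2 : HasDerivAt ρ (deriv ρ s) s := (hρd s).hasDerivAt
  have h3 : HasDerivAt (fun x => (ρ x) ^ 2) (2 * ρ s ^ 1 * deriv ρ s) s := by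
    simpa using h2.fun_pow 2
  have h4 : HasDerivAt (fun x => -(deriv ρ x) / (ρ x) ^ 2)
      ((-(deriv (deriv ρ) s) * (ρ s) ^ 2 - -(deriv ρ s) * (2 * ρ s ^ 1 * deriv ρ s)) / ((ρ s) ^ 2) ^ 2) s :=
    h1.neg.div h3 (pow_ne_zero 2 hρs)
  have hσ'' : deriv (deriv σ) s =
      (-(deriv (deriv ρ) s) * (ρ s) ^ 2 - -(deriv ρ s) * (2 * ρ s ^ 1 * deriv ρ s)) / ((ρ s) ^ 2) ^ 2 := by
    rw [hev.deriv_eq]; exact h4.deriv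
  have hE := hode s hs
  rw [hσ s, hσ'eq, hσ'']
  field_simp
  linear_combination (-1 : ℝ) * hE
end

section
/- Let ρ : I → (0,∞) be smooth and satisfy ρ·ρ'' - (α+2)·(ρ')² + (1+α)·ρ² = 0 on I, and let σ = 1/ρ. Then σ satisfies σ·σ'' - ((-2-α)+2)·(σ')² + (1+(-2-α))·σ² = 0, i.e., the same ODE with α replaced by -2-α. -/
/-- If ρ > 0 is smooth and satisfies ρρ'' - (α+2)ρ'² + (1+α)ρ² = 0 on an open set I,
then σ = 1/ρ satisfies the same ODE with α replaced by -2-α. -/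
theorem stmt_9 (α : ℝ) (I : Set ℝ) (hI : IsOpen I) (ρ : ℝ → ℝ)
    (hsm : ContDiff ℝ (⊤ : ℕ∞) ρ) (hpos : ∀ s ∈ I, 0 < ρ s)
    (hode : ∀ s ∈ I, ρ s * deriv (deriv ρ) s - (α + 2) * (deriv ρ s) ^ 2 + (1 + α) * (ρ s) ^ 2 = 0)
    (σ : ℝ → ℝ) (hσ : ∀ s : ℝ, σ s = (ρ s)⁻¹) :
    ∀ s ∈ I, σ s * deriv (deriv σ) s - ((-2 - α) + 2) * (deriv σ s) ^ 2 + (1 + (-2 - α)) * (σ s) ^ 2 = 0 := by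
  have hσf : σ = fun x => (ρ x)⁻¹ := funext hσ
  have hd : Differentiable ℝ ρ := hsm.differentiable (by simp)
  have hsm' : ContDiff ℝ (⊤ : ℕ∞) ρ := hsm.of_le (by simp)
  have hd2 : Differentiable ℝ (deriv ρ) :=
    (hsm'.iterate_deriv 1).differentiable (by simp)
  intro s hs
  have hρs : (0:ℝ) < ρ s := hpos s hs
  -- deriv σ on I
  have hderiv : ∀ x ∈ I, deriv σ x = -deriv ρ x / (ρ x) ^ 2 := by
    intro x hx
    have h : HasDerivAt σ (-deriv ρ x / (ρ x) ^ 2) x := by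
      rw [hσf]
      exact ((hd x).hasDerivAt.inv (hpos x hx).ne')
    exact h.deriv
  have heq : deriv σ =ᶠ[nhds s] (fun x => -deriv ρ x / (ρ x) ^ 2) := by
    filter_upwards [hI.mem_nhds hs] with x hx using hderiv x hx
  -- second derivative
  have h1 : HasDerivAt (fun x => -deriv ρ x) (-deriv (deriv ρ) s) s :=
    ((hd2 s).hasDerivAt).neg
  have h2 : HasDerivAt (fun x => (ρ x) ^ 2) (2 * ρ s ^ 1 * deriv ρ s) s := by
    refine (((hd s).hasDerivAt).pow 2).congr_deriv ?_; norm_num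
  have hg : HasDerivAt (fun x => -deriv ρ x / (ρ x) ^ 2)
      ((-deriv (deriv ρ) s * (ρ s) ^ 2 - (-deriv ρ s) * (2 * ρ s ^ 1 * deriv ρ s)) /
        ((ρ s) ^ 2) ^ 2) s :=
    h1.div h2 (pow_ne_zero _ hρs.ne')
  have hdd : deriv (deriv σ) s =
      (-deriv (deriv ρ) s * (ρ s) ^ 2 - (-deriv ρ s) * (2 * ρ s ^ 1 * deriv ρ s)) /
        ((ρ s) ^ 2) ^ 2 := by
    rw [heq.deriv_eq]
    exact hg.deriv
  rw [hσ s, hdd, hderiv s hs]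
  have hode' := hode s hs
  have hne : ρ s ≠ 0 := hρs.ne'
  field_simp
  linear_combination (-1) * hode'
end

section
/- For α > 1, the curve γ(s) = (cosh((α-1)s))^{1/(α-1)} · (sinh s, cosh s) satisfies lim_{s→∞} (γ₂(s) - γ₁(s)) = 2^{1/(1-α)}, where γ = (γ₁,γ₂). Hence γ is asymptotic to the line y = x + 2^{1/(1-α)}. -/
/-! With `β = α - 1`, `ρ s (cosh s - sinh s) = ρ s e⁻ˢ = (cosh (β s) e^{-β s}) ^ (1 / β)`, and
`cosh t e⁻ᵗ = (1 + e^{-2t}) / 2 → 1 / 2`, so the limit is `(1 / 2) ^ (1 / β)`. -/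

open Filter Topology Real

lemma Real.cosh_mul_exp_neg (x : ℝ) : cosh x * exp (-x) = (1 + exp (-(2 * x))) / 2 := by
  rw [cosh_eq, div_mul_eq_mul_div, add_mul, ← exp_add, ← exp_add, add_neg_cancel, exp_zero]
  ring_nf

lemma Real.tendsto_cosh_mul_exp_neg_atTop :
    Tendsto (fun x => cosh x * exp (-x)) atTop (𝓝 (1 / 2)) := by
  simp_rw [cosh_mul_exp_neg]
  have hexp : Tendsto (fun x : ℝ => exp (-(2 * x))) atTop (𝓝 0) :=
    tendsto_exp_neg_atTop_nhds_zero.comp (tendsto_id.const_mul_atTop two_pos)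
  simpa using (hexp.const_add 1).div_const 2

lemma Real.cosh_mul_rpow_one_div_mul_exp_neg {β : ℝ} (hβ : β ≠ 0) (s : ℝ) :
    cosh (β * s) ^ (1 / β) * exp (-s) = (cosh (β * s) * exp (-(β * s))) ^ (1 / β) := by
  rw [mul_rpow (cosh_pos _).le (exp_pos _).le, ← exp_mul]
  field_simp

/-- For α > 1, the curve γ(s) = cosh((α-1)s)^{1/(α-1)}(sinh s, cosh s) satisfies
lim_{s→∞} (γ₂(s) - γ₁(s)) = 2^{1/(1-α)}. -/
theorem stmt_10 (α : ℝ) (hα : 1 < α) (ρ : ℝ → ℝ)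
    (hρ : ∀ s : ℝ, ρ s = (Real.cosh ((α - 1) * s)) ^ (1 / (α - 1))) :
    Tendsto (fun s : ℝ => ρ s * Real.cosh s - ρ s * Real.sinh s) atTop
      (nhds ((2 : ℝ) ^ (1 / (1 - α)))) := by
  have hβ : 0 < α - 1 := sub_pos.mpr hα
  have hform : ∀ s, ρ s * cosh s - ρ s * sinh s
      = (cosh ((α - 1) * s) * exp (-((α - 1) * s))) ^ (1 / (α - 1)) := fun s => by
    rw [← mul_sub, cosh_sub_sinh, hρ, cosh_mul_rpow_one_div_mul_exp_neg hβ.ne']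
  have hlim : (2 : ℝ) ^ (1 / (1 - α)) = (1 / 2) ^ (1 / (α - 1)) := by
    rw [div_rpow zero_le_one zero_le_two, one_rpow, one_div (2 ^ _), ← rpow_neg zero_le_two,
      ← one_div_neg_eq_neg_one_div, neg_sub]
  simp_rw [hform, hlim]
  exact (tendsto_cosh_mul_exp_neg_atTop.comp (tendsto_id.const_mul_atTop hβ)).rpow_const
    (Or.inl one_half_pos.ne')
end

section
/- For 0 < α < 1, the curve γ(s) = (cosh((α-1)s))^{1/(α-1)} · (sinh s, cosh s) satisfies lim_{s→±∞} γ(s) = (±2^{α/(1-α)}, 2^{α/(1-α)}); in particular both limit points lie on the lightlike cone {(x,y) : x² = y²}. -/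
open Filter Real Topology

/-!
As `s → ∞`, both `exp (-s) * sinh s` and `exp (-s) * cosh s` tend to `1/2`, while for
`c = α - 1 < 0` the factor `cosh (c s) ^ (1/c)` behaves like `((exp (-c s)) / 2) ^ (1/c) =
2 ^ (-1/c) exp (-s)`. Multiplying, both coordinates tend to `2 ^ (-1/c) / 2 = 2 ^ (α/(1-α))`.
The limit at `-∞` follows because the profile `cosh (c s) ^ (1/c)` is even and `sinh` is odd.
-/

lemma exp_neg_mul_cosh (t : ℝ) : exp (-t) * cosh t = (1 + exp (-t) ^ 2) / 2 := by
  rw [cosh_eq, exp_neg]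
  field_simp

lemma exp_neg_mul_sinh (t : ℝ) : exp (-t) * sinh t = (1 - exp (-t) ^ 2) / 2 := by
  rw [sinh_eq, exp_neg]
  field_simp

lemma tendsto_exp_neg_mul_cosh_atTop :
    Tendsto (fun t => exp (-t) * cosh t) atTop (𝓝 2⁻¹) := by
  simp_rw [exp_neg_mul_cosh]
  simpa using ((tendsto_exp_neg_atTop_nhds_zero.pow 2).const_add 1).div_const 2

lemma tendsto_exp_neg_mul_sinh_atTop :
    Tendsto (fun t => exp (-t) * sinh t) atTop (𝓝 2⁻¹) := by
  simp_rw [exp_neg_mul_sinh]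
  simpa using ((tendsto_exp_neg_atTop_nhds_zero.pow 2).const_sub 1).div_const 2

lemma tendsto_cosh_mul_rpow_one_div_mul_exp {c : ℝ} (hc : c < 0) :
    Tendsto (fun s => cosh (c * s) ^ (1 / c) * exp s) atTop (𝓝 (2 ^ (-(1 / c)))) := by
  have hbase : Tendsto (fun s => exp (c * s) * cosh (c * s)) atTop (𝓝 2⁻¹) := by
    have := tendsto_exp_neg_mul_cosh_atTop.comp (tendsto_id.const_mul_atTop (neg_pos.2 hc))
    simpa [Function.comp_def, cosh_neg] using this
  have hpow := (continuousAt_rpow_const 2⁻¹ (1 / c) (Or.inl (by norm_num))).tendsto.comp hbase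
  rw [inv_rpow zero_le_two, ← rpow_neg zero_le_two] at hpow
  refine hpow.congr fun s => ?_
  have hexp : c * s * (1 / c) = s := by field_simp [hc.ne]
  rw [Function.comp_apply, mul_rpow (exp_pos _).le (cosh_pos _).le, ← exp_mul, hexp, mul_comm]

lemma Filter.Tendsto.mul_of_mul_exp {ι : Type*} {l : Filter ι} {x : ι → ℝ} {f g : ι → ℝ}
    {a b : ℝ} (hf : Tendsto (fun i => f i * Real.exp (x i)) l (𝓝 a))
    (hg : Tendsto (fun i => Real.exp (-x i) * g i) l (𝓝 b)) :
    Tendsto (fun i => f i * g i) l (𝓝 (a * b)) :=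
  (hf.mul hg).congr fun i => by
    rw [mul_assoc, ← mul_assoc (Real.exp _), ← Real.exp_add, add_neg_cancel, Real.exp_zero,
      one_mul]

theorem stmt_11_general (α : ℝ) (hα1 : α < 1) (ρ : ℝ → ℝ) (γ : ℝ → ℝ × ℝ)
    (hρ : ∀ s : ℝ, ρ s = (Real.cosh ((α - 1) * s)) ^ (1 / (α - 1)))
    (hγ : ∀ s : ℝ, γ s = (ρ s * Real.sinh s, ρ s * Real.cosh s)) :
    Tendsto γ atTop (nhds ((2 : ℝ) ^ (α / (1 - α)), (2 : ℝ) ^ (α / (1 - α)))) ∧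
    Tendsto γ atBot (nhds (-(2 : ℝ) ^ (α / (1 - α)), (2 : ℝ) ^ (α / (1 - α)))) ∧
    ((2 : ℝ) ^ (α / (1 - α))) ^ 2 = ((2 : ℝ) ^ (α / (1 - α))) ^ 2 ∧
    (-(2 : ℝ) ^ (α / (1 - α))) ^ 2 = ((2 : ℝ) ^ (α / (1 - α))) ^ 2 := by
  obtain rfl : γ = fun s => (cosh ((α - 1) * s) ^ (1 / (α - 1)) * sinh s,
      cosh ((α - 1) * s) ^ (1 / (α - 1)) * cosh s) := funext fun s => by rw [hγ, hρ]
  have hc : α - 1 < 0 := sub_neg.2 hα1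
  have hL : (2 : ℝ) ^ (-(1 / (α - 1))) * 2⁻¹ = 2 ^ (α / (1 - α)) := by
    rw [← rpow_neg_one, ← rpow_add two_pos]
    congr 1
    field_simp [hc.ne, (sub_pos.2 hα1).ne']
    ring
  have hprofile := tendsto_cosh_mul_rpow_one_div_mul_exp hc
  have hx := hprofile.mul_of_mul_exp tendsto_exp_neg_mul_sinh_atTop
  have hy := hprofile.mul_of_mul_exp tendsto_exp_neg_mul_cosh_atTop
  rw [hL] at hx hy
  refine ⟨hx.prodMk_nhds hy, ?_, rfl, neg_sq _⟩
  refine ((hx.neg.prodMk_nhds hy).comp tendsto_neg_atBot_atTop).congr fun s => ?_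
  simp

/-- For 0 < α < 1, the curve γ(s) = cosh((α-1)s)^{1/(α-1)}(sinh s, cosh s) tends to
(±2^{α/(1-α)}, 2^{α/(1-α)}) as s → ±∞, and these limit points lie on the lightlike cone. -/
theorem stmt_11 (α : ℝ) (hα0 : 0 < α) (hα1 : α < 1) (ρ : ℝ → ℝ) (γ : ℝ → ℝ × ℝ)
    (hρ : ∀ s : ℝ, ρ s = (Real.cosh ((α - 1) * s)) ^ (1 / (α - 1)))
    (hγ : ∀ s : ℝ, γ s = (ρ s * Real.sinh s, ρ s * Real.cosh s)) :
    Tendsto γ atTop (nhds ((2 : ℝ) ^ (α / (1 - α)), (2 : ℝ) ^ (α / (1 - α)))) ∧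
    Tendsto γ atBot (nhds (-(2 : ℝ) ^ (α / (1 - α)), (2 : ℝ) ^ (α / (1 - α)))) ∧
    ((2 : ℝ) ^ (α / (1 - α))) ^ 2 = ((2 : ℝ) ^ (α / (1 - α))) ^ 2 ∧
    (-(2 : ℝ) ^ (α / (1 - α))) ^ 2 = ((2 : ℝ) ^ (α / (1 - α))) ^ 2 :=
  stmt_11_general α hα1 ρ γ hρ hγ
end

section
/- Let γ(s) = (x₀ + r sinh s, y₀ + r cosh s) parametrize a hyperbolic circle with center p₀ = (x₀,y₀) ≠ (0,0), contained in 𝒞⁻. If the stationarity identity (1-α)⟨γ(s),γ(s)⟩ + α⟨γ(s),p₀⟩ = 0 holds for all s ∈ ℝ, then α = 2 and x₀² - y₀² = -r². -/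
/-!
Along the hyperbolic circle, `⟨γ, γ⟩ = ⟨p₀, p₀⟩ - r² + 2r(x₀ sinh s - y₀ cosh s)` and
`⟨γ, p₀⟩ = ⟨p₀, p₀⟩ + r(x₀ sinh s - y₀ cosh s)`, so the stationarity identity reads
`(⟨p₀, p₀⟩ - (1 - α) r²) + (2 - α) r x₀ sinh s - (2 - α) r y₀ cosh s = 0`.
Since `1`, `sinh`, `cosh` are linearly independent, all three coefficients vanish; as `p₀ ≠ 0`
this forces `α = 2`, and then `⟨p₀, p₀⟩ = -r²`.
-/

open Real

theorem eq_zero_of_forall_add_mul_sinh_add_mul_cosh_eq_zero {a b c : ℝ}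
    (h : ∀ s : ℝ, a + b * sinh s + c * cosh s = 0) : a = 0 ∧ b = 0 ∧ c = 0 := by
  have h₀ := h 0
  have hplus := h 1
  have hminus := h (-1)
  simp only [sinh_zero, cosh_zero, sinh_neg, cosh_neg] at h₀ hminus
  have hb₁ : b * sinh 1 = 0 := by linear_combination (hplus - hminus) / 2
  have hc₁ : c * (cosh 1 - 1) = 0 := by linear_combination (hplus + hminus) / 2 - h₀
  have hb : b = 0 := (mul_eq_zero.mp hb₁).resolve_right (sinh_pos_iff.mpr one_pos).ne'
  have hc : c = 0 :=
    (mul_eq_zero.mp hc₁).resolve_right (sub_ne_zero.mpr (one_lt_cosh.mpr one_ne_zero).ne')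
  exact ⟨by linear_combination h₀ - hc, hb, hc⟩

theorem stationarity_expression_eq (α r x₀ y₀ s : ℝ) :
    (1 - α) * ((x₀ + r * sinh s) * (x₀ + r * sinh s) - (y₀ + r * cosh s) * (y₀ + r * cosh s))
        + α * ((x₀ + r * sinh s) * x₀ - (y₀ + r * cosh s) * y₀) =
      (x₀ ^ 2 - y₀ ^ 2 - (1 - α) * r ^ 2) + (2 - α) * r * x₀ * sinh s
        + -((2 - α) * r * y₀) * cosh s := by
  linear_combination (α - 1) * r ^ 2 * cosh_sq_sub_sinh_sq s

theorem stmt_16_general (L : ℝ × ℝ → ℝ × ℝ → ℝ)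
    (hL : ∀ p q : ℝ × ℝ, L p q = p.1 * q.1 - p.2 * q.2)
    (α r x₀ y₀ : ℝ) (hr : 0 < r) (hp₀ : (x₀, y₀) ≠ ((0 : ℝ), (0 : ℝ)))
    (γ : ℝ → ℝ × ℝ) (hγ : ∀ s : ℝ, γ s = (x₀ + r * Real.sinh s, y₀ + r * Real.cosh s))
    (hstat : ∀ s : ℝ, (1 - α) * L (γ s) (γ s) + α * L (γ s) (x₀, y₀) = 0) :
    α = 2 ∧ x₀ ^ 2 - y₀ ^ 2 = -r ^ 2 := by
  obtain ⟨hconst, hsinh, hcosh⟩ := eq_zero_of_forall_add_mul_sinh_add_mul_cosh_eq_zero fun s => by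
    rw [← stationarity_expression_eq, ← hstat s, hγ, hL, hL]
  have hα : α = 2 := by
    by_contra hα
    have hcoeff : (2 - α) * r ≠ 0 := mul_ne_zero (sub_ne_zero.mpr (Ne.symm hα)) hr.ne'
    have hx₀ : x₀ = 0 := (mul_eq_zero.mp hsinh).resolve_left hcoeff
    have hy₀ : y₀ = 0 := (mul_eq_zero.mp (neg_eq_zero.mp hcosh)).resolve_left hcoeff
    exact hp₀ (by rw [hx₀, hy₀])
  refine ⟨hα, ?_⟩
  subst hα
  linear_combination hconst

/-- If a hyperbolic circle centered at p₀ ≠ 0 contained in 𝒞⁻ satisfies the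
stationarity identity (1-α)⟨γ,γ⟩ + α⟨γ,p₀⟩ = 0, then α = 2 and ⟨p₀,p₀⟩ = -r². -/
theorem stmt_16 (L : ℝ × ℝ → ℝ × ℝ → ℝ)
    (hL : ∀ p q : ℝ × ℝ, L p q = p.1 * q.1 - p.2 * q.2)
    (α r x₀ y₀ : ℝ) (hr : 0 < r) (hp₀ : (x₀, y₀) ≠ ((0 : ℝ), (0 : ℝ)))
    (γ : ℝ → ℝ × ℝ) (hγ : ∀ s : ℝ, γ s = (x₀ + r * Real.sinh s, y₀ + r * Real.cosh s))
    (hneg : ∀ s : ℝ, L (γ s) (γ s) < 0)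
    (hstat : ∀ s : ℝ, (1 - α) * L (γ s) (γ s) + α * L (γ s) (x₀, y₀) = 0) :
    α = 2 ∧ x₀ ^ 2 - y₀ ^ 2 = -r ^ 2 :=
  stmt_16_general L hL α r x₀ y₀ hr hp₀ γ hγ hstat
end

section
/- Fix α > -1 and r > 1. Among all smooth curves s ↦ (ρ(s), θ(s)) in hyperbolic polar coordinates on [a,b] with ρ > 0, ρ'² - ρ²θ'² > 0, ρ(a) = 1, ρ(b) = r, θ(a) = θ(b) = 0, the energy E_α = ∫_a^b ρ^α √(ρ'² - ρ²θ'²) ds satisfies E_α ≤ (r^{α+1} - 1)/(α+1), with equality for the radial segment ρ(s) = s, θ(s) = 0, s ∈ [1,r]. -/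
/-!
Since `√(ρ'² - ρ²θ'²) ≤ |ρ'|`, the energy of any spacelike curve is at most `∫ ρ^α |ρ'|`.
Spacelikeness forces `ρ' ≠ 0`, so by Darboux's theorem `ρ'` has a constant sign, which must be
positive because `ρ` climbs from `1` to `r > 1`. Substituting `t = ρ(s)` turns `∫ ρ^α ρ'` into
`∫_1^r t^α`, the energy of the radial segment.
-/

open Set intervalIntegral MeasureTheory

theorem Real.sqrt_sq_sub_le_abs (x : ℝ) {c : ℝ} (hc : 0 ≤ c) : √(x ^ 2 - c) ≤ |x| := by
  rw [← Real.sqrt_sq_eq_abs]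
  exact Real.sqrt_le_sqrt (by linarith)

theorem deriv_pos_of_deriv_ne_zero_of_lt {f : ℝ → ℝ} {a b : ℝ} (hf : Differentiable ℝ f)
    (hab : a ≤ b) (hne : ∀ x ∈ Icc a b, deriv f x ≠ 0) (hlt : f a < f b) :
    ∀ x ∈ Icc a b, 0 < deriv f x := by
  refine (hasDerivWithinAt_forall_lt_or_forall_gt_of_forall_ne (convex_Icc a b)
    (fun x _ ↦ (hf x).hasDerivAt.hasDerivWithinAt) hne).resolve_left fun hneg ↦ ?_
  have hanti : StrictAntiOn f (Icc a b) :=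
    strictAntiOn_of_deriv_neg (convex_Icc a b) hf.continuous.continuousOn fun x hx ↦
      hneg x (interior_subset hx)
  exact hlt.not_ge (hanti.antitoneOn (left_mem_Icc.2 hab) (right_mem_Icc.2 hab) hab)

/-- Unlike `intervalIntegral.integral_mono_on`, the smaller function need not be integrable. -/
theorem intervalIntegral.integral_mono_on_of_nonneg {f g : ℝ → ℝ} {a b : ℝ} (hab : a ≤ b)
    (hg : IntervalIntegrable g volume a b) (hf : ∀ x ∈ Icc a b, 0 ≤ f x)
    (hfg : ∀ x ∈ Icc a b, f x ≤ g x) :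
    ∫ x in a..b, f x ≤ ∫ x in a..b, g x := by
  rw [integral_of_le hab, integral_of_le hab]
  have hIoc : ∀ P : ℝ → Prop, (∀ x ∈ Icc a b, P x) → ∀ᵐ x ∂volume.restrict (Ioc a b), P x :=
    fun P hP ↦ (ae_restrict_iff' measurableSet_Ioc).2 <| ae_of_all _ fun x hx ↦
      hP x (Ioc_subset_Icc_self hx)
  exact integral_mono_of_nonneg (hIoc _ hf) hg.1 (hIoc _ hfg)

theorem intervalIntegral.integral_rpow_comp_mul_deriv {f : ℝ → ℝ} {a b : ℝ} (α : ℝ) (hab : a ≤ b)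
    (hf : Differentiable ℝ f) (hf' : Continuous (deriv f)) (hpos : ∀ x ∈ Icc a b, 0 < f x) :
    ∫ x in a..b, f x ^ α * deriv f x = ∫ t in f a..f b, t ^ α := by
  rw [← integral_comp_mul_deriv' (g := fun t ↦ t ^ α) (fun x _ ↦ (hf x).hasDerivAt)
    hf'.continuousOn]
  · rfl
  rw [uIcc_of_le hab]
  exact continuousOn_id.rpow_const fun t ⟨x, hx, hxt⟩ ↦ Or.inl (hxt ▸ (hpos x hx).ne')

theorem stmt_17_general (α r : ℝ) (hα : -1 < α) (hr : 1 < r)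
    (a b : ℝ) (hab : a < b) (ρ θ : ℝ → ℝ)
    (hρ : ContDiff ℝ 1 ρ)
    (hpos : ∀ s ∈ Set.Icc a b, 0 < ρ s)
    (hsp : ∀ s ∈ Set.Icc a b, (deriv ρ s) ^ 2 - (ρ s) ^ 2 * (deriv θ s) ^ 2 > 0)
    (ha1 : ρ a = 1) (hbr : ρ b = r) :
    (∫ s in a..b, (ρ s) ^ α * Real.sqrt ((deriv ρ s) ^ 2 - (ρ s) ^ 2 * (deriv θ s) ^ 2))
      ≤ (r ^ (α + 1) - 1) / (α + 1) ∧
    (∫ s in (1 : ℝ)..r, s ^ α) = (r ^ (α + 1) - 1) / (α + 1) := by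
  have hρ' : Continuous (deriv ρ) := hρ.continuous_deriv le_rfl
  have hρdiff : Differentiable ℝ ρ := hρ.differentiable one_ne_zero
  have hd : ∀ s ∈ Icc a b, 0 < deriv ρ s := by
    refine deriv_pos_of_deriv_ne_zero_of_lt hρdiff hab.le (fun s hs h0 ↦ ?_) (by linarith)
    have := hsp s hs
    rw [h0] at this
    nlinarith [sq_nonneg (ρ s * deriv θ s)]
  have hradial : ∫ s in (1 : ℝ)..r, s ^ α = (r ^ (α + 1) - 1) / (α + 1) := by
    rw [integral_rpow (Or.inl hα), Real.one_rpow]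
  have hρα : ContinuousOn (fun s ↦ ρ s ^ α) (Icc a b) :=
    hρdiff.continuous.continuousOn.rpow_const fun s hs ↦ Or.inl (hpos s hs).ne'
  refine ⟨?_, hradial⟩
  calc (∫ s in a..b, ρ s ^ α * √(deriv ρ s ^ 2 - ρ s ^ 2 * deriv θ s ^ 2))
      ≤ ∫ s in a..b, ρ s ^ α * deriv ρ s := by
        refine integral_mono_on_of_nonneg hab.le
          ((hρα.mul hρ'.continuousOn).intervalIntegrable_of_Icc hab.le)
          (fun s hs ↦ mul_nonneg (Real.rpow_nonneg (hpos s hs).le α) (Real.sqrt_nonneg _))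
          fun s hs ↦ mul_le_mul_of_nonneg_left ?_ (Real.rpow_nonneg (hpos s hs).le α)
        simpa only [abs_of_pos (hd s hs)] using
          Real.sqrt_sq_sub_le_abs (deriv ρ s) (c := ρ s ^ 2 * deriv θ s ^ 2) (by positivity)
    _ = ∫ t in (1 : ℝ)..r, t ^ α := by
        rw [integral_rpow_comp_mul_deriv α hab.le hρdiff hρ' hpos, ha1, hbr]
    _ = (r ^ (α + 1) - 1) / (α + 1) := hradial

/-- For α > -1 and r > 1, among spacelike curves in hyperbolic polar coordinates
joining (1,0) and (r,0), the energy ∫ ρ^α √(ρ'² - ρ²θ'²) is at most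
(r^{α+1}-1)/(α+1), with equality for the radial segment. -/
theorem stmt_17 (α r : ℝ) (hα : -1 < α) (hr : 1 < r)
    (a b : ℝ) (hab : a < b) (ρ θ : ℝ → ℝ)
    (hρ : ContDiff ℝ 1 ρ) (hθ : ContDiff ℝ 1 θ)
    (hpos : ∀ s ∈ Set.Icc a b, 0 < ρ s)
    (hsp : ∀ s ∈ Set.Icc a b, (deriv ρ s) ^ 2 - (ρ s) ^ 2 * (deriv θ s) ^ 2 > 0)
    (ha1 : ρ a = 1) (hbr : ρ b = r) (hθa : θ a = 0) (hθb : θ b = 0) :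
    (∫ s in a..b, (ρ s) ^ α * Real.sqrt ((deriv ρ s) ^ 2 - (ρ s) ^ 2 * (deriv θ s) ^ 2))
      ≤ (r ^ (α + 1) - 1) / (α + 1) ∧
    (∫ s in (1 : ℝ)..r, s ^ α) = (r ^ (α + 1) - 1) / (α + 1) :=
  stmt_17_general α r hα hr a b hab ρ θ hρ hpos hsp ha1 hbr
end
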